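/- Let L be a group and let μ : M → L and ν : N → L be crossed modules of groups over L, with induced mutual actions ᵐn := ^(μ(m))n and ⁿm := ^(ν(n))m. Then the commutative square with corners M ⊗ N, M, N, L, maps π_M : M ⊗ N → M and π_N : M ⊗ N → N determined by π_M(m ⊗ n) = m·(ⁿm)⁻¹ and π_N(m ⊗ n) = (ᵐn)·n⁻¹, the given L-actions on M and N, the L-action on M ⊗ N determined by ˡ(m ⊗ n) = (ˡm) ⊗ (ˡn), and the function h : M × N → M ⊗ N, h(m, n) := m ⊗ n, is a crossed square of groups (i.e. satisfies axioms (X0)–(X4)). -/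

import Mathlib

/-- A crossed module of groups: a homomorphism `μ : M → L` together with an action of `L`
on `M` by automorphisms, such that `μ` is equivariant (with `L` acting on itself by
conjugation) and the Peiffer identity holds. -/
def IsCrossedModule {M L : Type*} [Group M] [Group L]
    (μ : M →* L) (σ : L →* MulAut M) : Prop :=
  (∀ l m, μ (σ l m) = l * μ m * l⁻¹) ∧ ∀ m m', σ (μ m) m' = m * m' * m⁻¹

/-- The defining relations of the Brown–Loday non-abelian tensor product of two groups `M`
and `N` acting on each other via `actM : M → N → N` and `actN : N → M → M` (and on
themselves by conjugation): `(m * m') ⊗ n = (ᵐm' ⊗ ᵐn) * (m ⊗ n)` and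
`m ⊗ (n * n') = (m ⊗ n) * (ⁿm ⊗ ⁿn')`. -/
def tensorRels (M N : Type*) [Group M] [Group N]
    (actM : M → N → N) (actN : N → M → M) : Set (FreeGroup (M × N)) :=
  (Set.range fun p : M × M × N =>
    FreeGroup.of (p.1 * p.2.1, p.2.2) *
      (FreeGroup.of (p.1 * p.2.1 * p.1⁻¹, actM p.1 p.2.2) * FreeGroup.of (p.1, p.2.2))⁻¹) ∪
  (Set.range fun p : M × N × N =>
    FreeGroup.of (p.1, p.2.1 * p.2.2) *
      (FreeGroup.of (p.1, p.2.1) *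
        FreeGroup.of (actN p.2.1 p.1, p.2.1 * p.2.2 * p.2.1⁻¹))⁻¹)

/-- The Brown–Loday non-abelian tensor product `M ⊗ N` of groups `M` and `N` acting on
each other, presented by generators `m ⊗ n` and the tensor relations. -/
abbrev NATensor (M N : Type*) [Group M] [Group N]
    (actM : M → N → N) (actN : N → M → M) : Type _ :=
  PresentedGroup (tensorRels M N actM actN)

/-- The generator `m ⊗ n` of the non-abelian tensor product. -/
abbrev tensorOf {M N : Type*} [Group M] [Group N]
    {actM : M → N → N} {actN : N → M → M} (m : M) (n : N) :
    NATensor M N actM actN :=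
  PresentedGroup.of (m, n)

/-- A crossed square of groups (axioms (X0)–(X4) of Guin-Waléry–Brown–Loday), given by the
commutative square `μ ∘ p_M = ν ∘ p_N`, actions `σM`, `σN`, `σP` of `L` on `M`, `N`, `P`
and a function `h : M × N → P`. -/
def IsCrossedSquareGrp {P M N L : Type*} [Group P] [Group M] [Group N] [Group L]
    (pM : P →* M) (pN : P →* N) (μ : M →* L) (ν : N →* L)
    (σM : L →* MulAut M) (σN : L →* MulAut N) (σP : L →* MulAut P)
    (h : M → N → P) : Prop :=
  -- commutative square
  μ.comp pM = ν.comp pN ∧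
  -- (X.0)
  (∀ m m' n, h (m * m') n = σP (μ m) (h m' n) * h m n) ∧
  (∀ m n n', h m (n * n') = h m n * σP (ν n) (h m n')) ∧
  -- (X.1)
  (∀ l p, pM (σP l p) = σM l (pM p)) ∧
  (∀ l p, pN (σP l p) = σN l (pN p)) ∧
  IsCrossedModule μ σM ∧ IsCrossedModule ν σN ∧ IsCrossedModule (μ.comp pM) σP ∧
  -- (X.2)
  (∀ m n, pM (h m n) = m * (σM (ν n) m)⁻¹) ∧
  (∀ m n, pN (h m n) = σN (μ m) n * n⁻¹) ∧
  -- (X.3)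
  (∀ p n, h (pM p) n = p * (σP (ν n) p)⁻¹) ∧
  (∀ m p, h m (pN p) = σP (μ m) p * p⁻¹) ∧
  -- (X.4)
  (∀ l m n, σP l (h m n) = h (σM l m) (σN l n))


/-!
The relations of `M ⊗ N` are the axiom (X0) for the diagonal `L`-action. Expanding
`(m * m') ⊗ (n * n')` in the two possible orders shows that conjugation by `m ⊗ n` is the action
of the commutator `[μ m, ν n] = μ (π_M (m ⊗ n))`; as both sides are homomorphisms
`M ⊗ N → Aut (M ⊗ N)`, this is the Peiffer identity for `μ ∘ π_M`. For (X3), the maps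
`t ↦ (π_M t ⊗ n)⁻¹` and `t ↦ m ⊗ π_N t` are cocycles for the conjugation action of `M ⊗ N` on
itself, so they are determined by their values on generators, where (X3) is a direct computation
from (X0) and the Peiffer identity.
-/

/-- The cocycle identity says exactly that `t ↦ g t * t` is a homomorphism. -/
theorem PresentedGroup.cocycle_mul_self_eq {α : Type*} {rels : Set (FreeGroup α)}
    (g : PresentedGroup rels → PresentedGroup rels)
    (hg : ∀ t s, g (t * s) = g t * (t * g s * t⁻¹))
    (f : PresentedGroup rels →* PresentedGroup rels)
    (hgen : ∀ a, g (of a) * of a = f (of a)) (t : PresentedGroup rels) :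
    g t * t = f t := by
  let G : PresentedGroup rels →* PresentedGroup rels :=
    MonoidHom.mk' (fun t => g t * t) fun t s => by rw [hg]; group
  exact DFunLike.congr_fun (PresentedGroup.ext (φ := G) hgen) t

theorem PresentedGroup.mulAut_ext {α : Type*} {rels : Set (FreeGroup α)}
    {f g : MulAut (PresentedGroup rels)} (h : ∀ a, f (of a) = g (of a)) : f = g :=
  MulEquiv.toMonoidHom_injective (PresentedGroup.ext h)

theorem IsCrossedModule.map_mul_inv_act {M L : Type*} [Group M] [Group L]
    {μ : M →* L} {σ : L →* MulAut M} (hμ : IsCrossedModule μ σ) (l : L) (m : M) :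
    μ (m * (σ l m)⁻¹) = μ m * l * (μ m)⁻¹ * l⁻¹ := by
  rw [map_mul, map_inv, hμ.1]; group

theorem IsCrossedModule.map_act_mul_inv {M L : Type*} [Group M] [Group L]
    {μ : M →* L} {σ : L →* MulAut M} (hμ : IsCrossedModule μ σ) (l : L) (m : M) :
    μ (σ l m * m⁻¹) = l * μ m * l⁻¹ * (μ m)⁻¹ := by
  rw [map_mul, map_inv, hμ.1]

namespace NATensor

variable {M N : Type*} [Group M] [Group N] {actM : M → N → N} {actN : N → M → M}

theorem tensorOf_mul_left (m m' : M) (n : N) :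
    (tensorOf (m * m') n : NATensor M N actM actN) =
      tensorOf (m * m' * m⁻¹) (actM m n) * tensorOf m n :=
  (PresentedGroup.mk_eq_mk_of_mul_inv_mem (y := FreeGroup.of (m * m' * m⁻¹, actM m n) *
    FreeGroup.of (m, n)) (Or.inl ⟨(m, m', n), rfl⟩)).trans (map_mul _ _ _)

theorem tensorOf_mul_right (m : M) (n n' : N) :
    (tensorOf m (n * n') : NATensor M N actM actN) =
      tensorOf m n * tensorOf (actN n m) (n * n' * n⁻¹) :=
  (PresentedGroup.mk_eq_mk_of_mul_inv_mem (y := FreeGroup.of (m, n) *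
    FreeGroup.of (actN n m, n * n' * n⁻¹)) (Or.inr ⟨(m, n, n'), rfl⟩)).trans (map_mul _ _ _)

end NATensor

section CrossedModules

variable {M N L : Type*} [Group M] [Group N] [Group L] {μ : M →* L} {ν : N →* L}
  {σM : L →* MulAut M} {σN : L →* MulAut N}

local notation "𝕋" => NATensor M N (fun m n => σN (μ m) n) (fun n m => σM (ν n) m)

theorem tensorOf_mul_left_act (hμ : IsCrossedModule μ σM) {φ : L →* MulAut 𝕋}
    (hφ : ∀ l m n, φ l (tensorOf m n) = tensorOf (σM l m) (σN l n)) (m m' : M) (n : N) :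
    (tensorOf (m * m') n : 𝕋) = φ (μ m) (tensorOf m' n) * tensorOf m n := by
  rw [hφ, hμ.2]
  exact NATensor.tensorOf_mul_left m m' n

theorem tensorOf_mul_right_act (hν : IsCrossedModule ν σN) {φ : L →* MulAut 𝕋}
    (hφ : ∀ l m n, φ l (tensorOf m n) = tensorOf (σM l m) (σN l n)) (m : M) (n n' : N) :
    (tensorOf m (n * n') : 𝕋) = tensorOf m n * φ (ν n) (tensorOf m n') := by
  rw [hφ, hν.2]
  exact NATensor.tensorOf_mul_right m n n'

theorem act_commutator_eq_conj_tensorOf (hμ : IsCrossedModule μ σM)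
    (hν : IsCrossedModule ν σN) {φ : L →* MulAut 𝕋}
    (hφ : ∀ l m n, φ l (tensorOf m n) = tensorOf (σM l m) (σN l n)) (m : M) (n : N) :
    φ (μ m * ν n * (μ m)⁻¹ * (ν n)⁻¹) = MulAut.conj (tensorOf m n) := by
  -- expand `(m * m') ⊗ (n * n')` in the two possible orders
  have hcomm : φ (μ m * ν n) = MulAut.conj (tensorOf m n) * φ (ν n * μ m) := by
    refine PresentedGroup.mulAut_ext fun ⟨m', n'⟩ => ?_
    have h := (tensorOf_mul_left_act hμ hφ m m' (n * n')).symm.trans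
      (tensorOf_mul_right_act hν hφ (m * m') n n')
    simp only [tensorOf_mul_right_act hν hφ, tensorOf_mul_left_act hμ hφ, map_mul, mul_assoc,
      mul_right_inj] at h
    rw [← mul_assoc, ← mul_assoc, mul_left_inj] at h
    simp only [map_mul, MulAut.mul_apply, MulAut.conj_apply]
    exact eq_mul_inv_of_mul_eq h
  rw [← mul_inv_eq_iff_eq_mul, ← map_inv, ← map_mul] at hcomm
  rw [← hcomm]
  group

theorem tensorOf_mul_inv_act_left (hμ : IsCrossedModule μ σM) (hν : IsCrossedModule ν σN)
    {φ : L →* MulAut 𝕋} (hφ : ∀ l m n, φ l (tensorOf m n) = tensorOf (σM l m) (σN l n))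
    (m : M) (n₀ n : N) :
    (tensorOf (m * (σM (ν n₀) m)⁻¹) n : 𝕋) =
      tensorOf m n₀ * (φ (ν n) (tensorOf m n₀))⁻¹ := by
  have hsplit := tensorOf_mul_left_act hμ hφ (m * (σM (ν n₀) m)⁻¹) (σM (ν n₀) m) n
  rw [inv_mul_cancel_right, hμ.map_mul_inv_act, act_commutator_eq_conj_tensorOf hμ hν hφ,
    MulAut.conj_apply] at hsplit
  have hm₁ : tensorOf (σM (ν n₀) m) n = φ (ν n₀) (tensorOf m (n₀⁻¹ * n * n₀)) := by
    rw [hφ, hν.2]; group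
  have hc : tensorOf m n₀ * φ (ν n₀) (tensorOf m (n₀⁻¹ * n * n₀)) =
      tensorOf m n * φ (ν n) (tensorOf m n₀) := by
    rw [← tensorOf_mul_right_act hν hφ, ← tensorOf_mul_right_act hν hφ]; group
  rw [hm₁, hc] at hsplit
  rw [eq_inv_mul_of_mul_eq hsplit.symm]
  group

theorem tensorOf_act_mul_inv_right (hμ : IsCrossedModule μ σM) (hν : IsCrossedModule ν σN)
    {φ : L →* MulAut 𝕋} (hφ : ∀ l m n, φ l (tensorOf m n) = tensorOf (σM l m) (σN l n))
    (m m₀ : M) (n : N) :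
    (tensorOf m (σN (μ m₀) n * n⁻¹) : 𝕋) =
      φ (μ m) (tensorOf m₀ n) * (tensorOf m₀ n)⁻¹ := by
  have hsplit := tensorOf_mul_right_act hν hφ m (σN (μ m₀) n * n⁻¹) n
  rw [inv_mul_cancel_right, hν.map_act_mul_inv, act_commutator_eq_conj_tensorOf hμ hν hφ,
    MulAut.conj_apply] at hsplit
  have hn₁ : tensorOf m (σN (μ m₀) n) = φ (μ m₀) (tensorOf (m₀⁻¹ * m * m₀) n) := by
    rw [hφ, hμ.2]; group
  have hc : φ (μ m₀) (tensorOf (m₀⁻¹ * m * m₀) n) * tensorOf m₀ n =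
      φ (μ m) (tensorOf m₀ n) * tensorOf m n := by
    rw [← tensorOf_mul_left_act hμ hφ, ← tensorOf_mul_left_act hμ hφ]; group
  rw [hn₁] at hsplit
  rw [eq_mul_inv_of_mul_eq hsplit.symm]
  simp only [mul_inv_rev, inv_inv, ← mul_assoc, hc]
  group

theorem projM_map_act (hν : IsCrossedModule ν σN) {φ : L →* MulAut 𝕋}
    (hφ : ∀ l m n, φ l (tensorOf m n) = tensorOf (σM l m) (σN l n)) {πM : 𝕋 →* M}
    (hπM : ∀ m n, πM (tensorOf m n) = m * (σM (ν n) m)⁻¹) (l : L) (t : 𝕋) :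
    πM (φ l t) = σM l (πM t) := by
  have h : πM.comp (φ l).toMonoidHom = (σM l).toMonoidHom.comp πM :=
    PresentedGroup.ext fun ⟨m, n⟩ => by
      simp [hφ, hπM, hν.1, MulAut.mul_apply]
  exact DFunLike.congr_fun h t

theorem projN_map_act (hμ : IsCrossedModule μ σM) {φ : L →* MulAut 𝕋}
    (hφ : ∀ l m n, φ l (tensorOf m n) = tensorOf (σM l m) (σN l n)) {πN : 𝕋 →* N}
    (hπN : ∀ m n, πN (tensorOf m n) = σN (μ m) n * n⁻¹) (l : L) (t : 𝕋) :
    πN (φ l t) = σN l (πN t) := by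
  have h : πN.comp (φ l).toMonoidHom = (σN l).toMonoidHom.comp πN :=
    PresentedGroup.ext fun ⟨m, n⟩ => by
      simp [hφ, hπN, hμ.1, MulAut.mul_apply]
  exact DFunLike.congr_fun h t

theorem comp_projM_eq_comp_projN (hμ : IsCrossedModule μ σM) (hν : IsCrossedModule ν σN)
    {πM : 𝕋 →* M} (hπM : ∀ m n, πM (tensorOf m n) = m * (σM (ν n) m)⁻¹)
    {πN : 𝕋 →* N} (hπN : ∀ m n, πN (tensorOf m n) = σN (μ m) n * n⁻¹) :
    μ.comp πM = ν.comp πN :=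
  PresentedGroup.ext fun ⟨m, n⟩ => by
    simp only [MonoidHom.comp_apply]
    rw [hπM, hπN, hμ.map_mul_inv_act, hν.map_act_mul_inv]

theorem act_comp_projM_eq_conj (hμ : IsCrossedModule μ σM) (hν : IsCrossedModule ν σN)
    {φ : L →* MulAut 𝕋} (hφ : ∀ l m n, φ l (tensorOf m n) = tensorOf (σM l m) (σN l n))
    {πM : 𝕋 →* M} (hπM : ∀ m n, πM (tensorOf m n) = m * (σM (ν n) m)⁻¹) :
    φ.comp (μ.comp πM) = MulAut.conj :=
  PresentedGroup.ext fun ⟨m, n⟩ => by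
    simp only [MonoidHom.comp_apply]
    rw [hπM, hμ.map_mul_inv_act, act_commutator_eq_conj_tensorOf hμ hν hφ]

theorem isCrossedModule_comp_projM (hμ : IsCrossedModule μ σM) (hν : IsCrossedModule ν σN)
    {φ : L →* MulAut 𝕋} (hφ : ∀ l m n, φ l (tensorOf m n) = tensorOf (σM l m) (σN l n))
    {πM : 𝕋 →* M} (hπM : ∀ m n, πM (tensorOf m n) = m * (σM (ν n) m)⁻¹) :
    IsCrossedModule (μ.comp πM) φ := by
  refine ⟨fun l t => ?_, fun t x => ?_⟩
  · rw [MonoidHom.comp_apply, MonoidHom.comp_apply, projM_map_act hν hφ hπM, hμ.1]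
  · rw [← MonoidHom.comp_apply φ, act_comp_projM_eq_conj hμ hν hφ hπM, MulAut.conj_apply]

theorem tensorOf_projM_left (hμ : IsCrossedModule μ σM) (hν : IsCrossedModule ν σN)
    {φ : L →* MulAut 𝕋} (hφ : ∀ l m n, φ l (tensorOf m n) = tensorOf (σM l m) (σN l n))
    {πM : 𝕋 →* M} (hπM : ∀ m n, πM (tensorOf m n) = m * (σM (ν n) m)⁻¹) (t : 𝕋) (n : N) :
    tensorOf (πM t) n = t * (φ (ν n) t)⁻¹ := by
  have hconj := (isCrossedModule_comp_projM hμ hν hφ hπM).2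
  have h := PresentedGroup.cocycle_mul_self_eq (fun t => (tensorOf (πM t) n)⁻¹)
    (fun t s => by
      simp only [map_mul, tensorOf_mul_left_act hμ hφ]
      rw [← MonoidHom.comp_apply μ, hconj]
      group)
    (φ (ν n)).toMonoidHom
    (fun ⟨m, n₀⟩ => by
      simp only [MulEquiv.coe_toMonoidHom]
      rw [hπM, tensorOf_mul_inv_act_left hμ hν hφ]
      group) t
  rw [MulEquiv.coe_toMonoidHom] at h
  rw [← h]
  group

theorem tensorOf_projN_right (hμ : IsCrossedModule μ σM) (hν : IsCrossedModule ν σN)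
    {φ : L →* MulAut 𝕋} (hφ : ∀ l m n, φ l (tensorOf m n) = tensorOf (σM l m) (σN l n))
    {πM : 𝕋 →* M} (hπM : ∀ m n, πM (tensorOf m n) = m * (σM (ν n) m)⁻¹)
    {πN : 𝕋 →* N} (hπN : ∀ m n, πN (tensorOf m n) = σN (μ m) n * n⁻¹) (m : M) (t : 𝕋) :
    tensorOf m (πN t) = φ (μ m) t * t⁻¹ := by
  have hconj := (isCrossedModule_comp_projM hμ hν hφ hπM).2
  have hsq := comp_projM_eq_comp_projN hμ hν hπM hπN
  have h := PresentedGroup.cocycle_mul_self_eq (fun t => tensorOf m (πN t))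
    (fun t s => by
      simp only [map_mul, tensorOf_mul_right_act hν hφ]
      rw [← MonoidHom.comp_apply ν, ← hsq, hconj])
    (φ (μ m)).toMonoidHom
    (fun ⟨m₀, n⟩ => by
      simp only [MulEquiv.coe_toMonoidHom]
      rw [hπN, tensorOf_act_mul_inv_right hμ hν hφ]
      group) t
  rw [MulEquiv.coe_toMonoidHom] at h
  rw [← h]
  group

end CrossedModules

/-- Given crossed modules `μ : M → L` and `ν : N → L`, the square with corners
`M ⊗ N`, `M`, `N`, `L`, the projections `π_M`, `π_N`, the `L`-action determined by
`ˡ(m ⊗ n) = (ˡm) ⊗ (ˡn)`, and `h (m, n) = m ⊗ n`, is a crossed square of groups. -/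
theorem tensor_square_is_crossed_square
    {M N L : Type*} [Group M] [Group N] [Group L]
    (μ : M →* L) (ν : N →* L) (σM : L →* MulAut M) (σN : L →* MulAut N)
    (hμ : IsCrossedModule μ σM) (hν : IsCrossedModule ν σN)
    (πM : NATensor M N (fun m n => σN (μ m) n) (fun n m => σM (ν n) m) →* M)
    (hπM : ∀ (m : M) (n : N), πM (tensorOf m n) = m * (σM (ν n) m)⁻¹)
    (πN : NATensor M N (fun m n => σN (μ m) n) (fun n m => σM (ν n) m) →* N)
    (hπN : ∀ (m : M) (n : N), πN (tensorOf m n) = σN (μ m) n * n⁻¹)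
    (φ : L →* MulAut (NATensor M N (fun m n => σN (μ m) n) (fun n m => σM (ν n) m)))
    (hφ : ∀ (l : L) (m : M) (n : N),
      φ l (tensorOf m n) = tensorOf (σM l m) (σN l n)) :
    IsCrossedSquareGrp πM πN μ ν σM σN φ (fun m n => tensorOf m n) :=
  ⟨comp_projM_eq_comp_projN hμ hν hπM hπN, tensorOf_mul_left_act hμ hφ,
    tensorOf_mul_right_act hν hφ, projM_map_act hν hφ hπM, projN_map_act hμ hφ hπN, hμ, hν,
    isCrossedModule_comp_projM hμ hν hφ hπM, hπM, hπN, tensorOf_projM_left hμ hν hφ hπM,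
    tensorOf_projN_right hμ hν hφ hπM hπN, hφ⟩
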